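/- A triangle-free graph G is minimally nonperfectly divisible if and only if G is 4-critical (i.e., χ(G) = 4 and χ(G − v) ≤ 3 for every vertex v). -/

import Mathlib

/-!
In a triangle-free graph every clique has at most two vertices, so a perfect induced subgraph is
just a bipartite one. Hence a perfect division of an induced subgraph `H` with an edge is a
bipartite part together with an independent set, i.e. a 3-colouring of `H`, while an edgeless `H`
is itself perfect. So `G[S]` is perfectly divisible exactly when it is 3-colourable, and being
minimally nonperfectly divisible becomes: `G` is not 3-colourable but every `G - v` is. Such a `G`
is 4-colourable (give `v` a fourth colour), hence 4-critical.
-/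

open SimpleGraph

variable {V : Type}

/-- The clique number of the subgraph of `G` induced on `S`. -/
noncomputable def omegaOn (G : SimpleGraph V) (S : Set V) : ℕ :=
  sSup {n | ∃ s : Finset V, ↑s ⊆ S ∧ G.IsNClique n s}

/-- The subgraph of `G` induced on `S` is a perfect graph. -/
def IsPerfectOn (G : SimpleGraph V) (S : Set V) : Prop :=
  ∀ T : Set V, T ⊆ S → (G.induce T).chromaticNumber = (omegaOn G T : ℕ∞)

/-- Every nonempty induced subgraph of `G[S]` admits a perfect division. -/
def PerfDivOn (G : SimpleGraph V) (S : Set V) : Prop :=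
  ∀ H : Set V, H ⊆ S → H.Nonempty →
    ∃ A B : Set V, A ∪ B = H ∧ Disjoint A B ∧
      IsPerfectOn G A ∧ omegaOn G B < omegaOn G H

/-- `G` is minimally nonperfectly divisible. -/
def MNPD (G : SimpleGraph V) : Prop :=
  ¬ PerfDivOn G Set.univ ∧ ∀ S : Set V, S ≠ Set.univ → PerfDivOn G S

/-- The external neighbourhood `N(X)`. -/
def extNbhd (G : SimpleGraph V) (X : Set V) : Set V :=
  {v | v ∉ X ∧ ∃ x ∈ X, G.Adj v x}

namespace SimpleGraph

variable {G : SimpleGraph V} {S T A B : Set V} {m n : ℕ}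

lemma colorable_induce_univ_iff : (G.induce Set.univ).Colorable n ↔ G.Colorable n :=
  colorable_congr G.induceUnivIso

lemma Colorable.induce_of_subset (hST : S ⊆ T) (h : (G.induce T).Colorable n) :
    (G.induce S).Colorable n :=
  h.of_hom (G.induceHomOfLE hST).toHom

lemma colorable_one_induce_iff : (G.induce S).Colorable 1 ↔ G.IsIndepSet S := by
  rw [colorable_one_iff, eq_bot_iff_forall_not_adj]
  exact ⟨fun h u hu v hv _ huv => h ⟨u, hu⟩ ⟨v, hv⟩ huv,
    fun h u v huv => h u.2 v.2 (G.ne_of_adj huv) huv⟩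

lemma Colorable.induce_union (hA : (G.induce A).Colorable m) (hB : (G.induce B).Colorable n) :
    (G.induce (A ∪ B)).Colorable (m + n) := by
  classical
  obtain ⟨cA⟩ := hA
  obtain ⟨cB⟩ := hB
  let c : (G.induce (A ∪ B)).Coloring (Fin m ⊕ Fin n) := Coloring.mk
    (fun v => if h : (v : V) ∈ A then .inl (cA ⟨v, h⟩) else .inr (cB ⟨v, v.2.resolve_left h⟩))
    (by
      rintro ⟨u, hu⟩ ⟨v, hv⟩ huv
      by_cases huA : u ∈ A <;> by_cases hvA : v ∈ A <;> simp only [huA, hvA, dif_pos, dif_neg,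
        not_false_eq_true, ne_eq, Sum.inl.injEq, Sum.inr.injEq, reduceCtorEq]
      · exact cA.valid (show G.Adj u v from huv)
      · exact cB.valid (show G.Adj u v from huv))
  simpa using c.colorable

lemma colorable_succ_of_colorable_induce_compl (v : V) (h : (G.induce {v}ᶜ).Colorable n) :
    G.Colorable (n + 1) := by
  have hv : (G.induce {v}).Colorable 1 :=
    colorable_one_induce_iff.2 (Set.subsingleton_singleton.pairwise _)
  rw [← colorable_induce_univ_iff, ← Set.compl_union_self {v}]
  exact h.induce_union hv

lemma forall_ne_univ_colorable_induce_iff :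
    (∀ S : Set V, S ≠ Set.univ → (G.induce S).Colorable n) ↔
      ∀ v, (G.induce {v}ᶜ).Colorable n := by
  refine ⟨fun h v => h _ fun hv => (hv.symm ▸ Set.mem_univ v : v ∈ ({v}ᶜ : Set V)) rfl,
    fun h S hS => ?_⟩
  obtain ⟨v, hv⟩ := Set.ne_univ_iff_exists_notMem S |>.1 hS
  exact (h v).induce_of_subset (Set.subset_compl_singleton_iff.2 hv)

lemma exists_isIndepSet_colorable_induce_diff (h : (G.induce S).Colorable (n + 1)) :
    ∃ B ⊆ S, G.IsIndepSet B ∧ (G.induce (S \ B)).Colorable n := by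
  obtain ⟨c⟩ := h
  set B := Subtype.val '' c.colorClass (Fin.last n)
  have hlast (v : ↥(S \ B)) : c ⟨v, v.2.1⟩ ≠ Fin.last n := fun hv => v.2.2 ⟨_, hv, rfl⟩
  refine ⟨B, by simp [B], ?_, ⟨Coloring.mk (fun v => (c ⟨v, v.2.1⟩).castPred (hlast v)) ?_⟩⟩
  · rintro _ ⟨u, hu, rfl⟩ _ ⟨v, hv, rfl⟩ huv
    exact c.isIndepSet_colorClass _ hu hv fun h => huv (congrArg Subtype.val h)
  · intro u v huv heq
    exact c.valid (v := ⟨u, u.2.1⟩) (w := ⟨v, v.2.1⟩) huv (Fin.castPred_inj.1 heq)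

end SimpleGraph

section CliqueNumber

variable {G : SimpleGraph V} {S A : Set V} {k n : ℕ}

lemma omegaOn_le_of_forall (h : ∀ n (s : Finset V), ↑s ⊆ S → G.IsNClique n s → n ≤ k) :
    omegaOn G S ≤ k :=
  csSup_le ⟨0, ∅, by simp⟩ fun n ⟨s, hs, hns⟩ => h n s hs hns

lemma le_omegaOn (hG : G.CliqueFree k) {s : Finset V} (hs : ↑s ⊆ S) (hns : G.IsNClique n s) :
    n ≤ omegaOn G S :=
  le_csSup ⟨k, fun _ ⟨t, _, ht⟩ => le_of_not_gt fun hk => hG.mono hk.le t ht⟩ ⟨s, hs, hns⟩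

lemma omegaOn_le_of_cliqueFree (hG : G.CliqueFree (k + 1)) : omegaOn G S ≤ k :=
  omegaOn_le_of_forall fun _ s _ hns => le_of_not_gt fun hk => hG.mono hk s hns

lemma omegaOn_le_chromaticNumber : (omegaOn G S : ℕ∞) ≤ (G.induce S).chromaticNumber := by
  refine le_chromaticNumber_iff_colorable.2 fun m hm => Nat.cast_le.2 ?_
  refine omegaOn_le_of_forall fun n s hs hns => ?_
  have := hm.card_le_of_pairwise_adj (fun x : s => (⟨x, hs x.2⟩ : S))
    fun x y hxy => hns.1 x.2 y.2 (Subtype.coe_injective.ne hxy)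
  simpa [hns.2] using this

lemma omegaOn_empty : omegaOn G ∅ = 0 :=
  Nat.le_zero.1 <| omegaOn_le_of_forall fun n s hs hns => by
    rw [← hns.2, Nat.le_zero, Finset.card_eq_zero, ← Finset.coe_eq_empty]
    exact Set.subset_empty_iff.1 hs

lemma omegaOn_pos_iff (hG : G.CliqueFree k) : 0 < omegaOn G S ↔ S.Nonempty := by
  refine ⟨fun h => ?_, fun ⟨x, hx⟩ => le_omegaOn hG (s := {x}) (by simpa) (by simp)⟩
  by_contra hS
  rw [Set.not_nonempty_iff_eq_empty.1 hS, omegaOn_empty] at h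
  exact h.false

lemma omegaOn_lt_two_iff (hG : G.CliqueFree k) : omegaOn G S < 2 ↔ G.IsIndepSet S := by
  classical
  refine ⟨fun h x hx y hy hxy hadj => h.not_ge ?_, fun h => Nat.lt_succ_of_le ?_⟩
  · refine le_omegaOn hG (s := {x, y}) ?_ ⟨by rw [Finset.coe_pair]; exact isClique_pair.2 fun _ => hadj, Finset.card_pair hxy⟩
    simp [Set.insert_subset_iff, hx, hy]
  · refine omegaOn_le_of_forall fun n s hs hns => ?_
    rw [← hns.2, Finset.card_le_one]
    exact fun a ha b hb => by_contra fun hab => h (hs ha) (hs hb) hab (hns.1 ha hb hab)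

lemma isPerfectOn_iff_colorable_two (hG : G.CliqueFree 3) :
    IsPerfectOn G A ↔ (G.induce A).Colorable 2 := by
  refine ⟨fun h => ?_, fun h T hT => ?_⟩
  · rw [← chromaticNumber_le_iff_colorable, h A subset_rfl]
    exact Nat.cast_le.2 (omegaOn_le_of_cliqueFree hG)
  refine le_antisymm (Colorable.chromaticNumber_le ?_) omegaOn_le_chromaticNumber
  rcases lt_or_ge (omegaOn G T) 2 with hlt | hge
  · have hT : G.IsIndepSet T := (omegaOn_lt_two_iff hG).1 hlt
    interval_cases hω : omegaOn G T
    · have : T = ∅ := Set.not_nonempty_iff_eq_empty.1 fun hT => ((omegaOn_pos_iff hG).2 hT).ne' hω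
      subst this
      exact .of_isEmpty 0
    · exact colorable_one_induce_iff.2 hT
  · exact (h.induce_of_subset hT).mono hge

lemma perfDivOn_iff_colorable_three (hG : G.CliqueFree 3) :
    PerfDivOn G S ↔ (G.induce S).Colorable 3 := by
  refine ⟨fun h => ?_, fun h H hHS hH => ?_⟩
  · rcases S.eq_empty_or_nonempty with rfl | hS
    · exact .of_isEmpty 3
    obtain ⟨A, B, rfl, -, hA, hB⟩ := h S subset_rfl hS
    have hBi : G.IsIndepSet B :=
      (omegaOn_lt_two_iff hG).1 (hB.trans_le (omegaOn_le_of_cliqueFree hG))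
    exact ((isPerfectOn_iff_colorable_two hG).1 hA).induce_union (colorable_one_induce_iff.2 hBi)
  by_cases hHi : G.IsIndepSet H
  · refine ⟨H, ∅, Set.union_empty H, Set.disjoint_empty H, ?_, ?_⟩
    · exact (isPerfectOn_iff_colorable_two hG).2 ((colorable_one_induce_iff.2 hHi).mono one_le_two)
    · rw [omegaOn_empty]
      exact (omegaOn_pos_iff hG).2 hH
  obtain ⟨B, hBH, hBi, hA⟩ := exists_isIndepSet_colorable_induce_diff (h.induce_of_subset hHS)
  refine ⟨H \ B, B, Set.sdiff_union_of_subset hBH, Set.disjoint_sdiff_left,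
    (isPerfectOn_iff_colorable_two hG).2 hA, ?_⟩
  exact ((omegaOn_lt_two_iff hG).2 hBi).trans_le (not_lt.1 (mt (omegaOn_lt_two_iff hG).1 hHi))

end CliqueNumber

theorem stmt_19_general (G : SimpleGraph V) (htf : G.CliqueFree 3) :
    MNPD G ↔
      (G.chromaticNumber = 4 ∧
        ∀ v : V, (G.induce ({v}ᶜ : Set V)).chromaticNumber ≤ 3) := by
  have hχ4 : G.chromaticNumber = 4 ↔ G.Colorable 4 ∧ ¬G.Colorable 3 :=
    chromaticNumber_eq_iff_colorable_not_colorable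
  have hχ3 (v : V) : (G.induce {v}ᶜ).chromaticNumber ≤ 3 ↔ (G.induce {v}ᶜ).Colorable 3 :=
    chromaticNumber_le_iff_colorable
  simp only [MNPD, perfDivOn_iff_colorable_three htf, colorable_induce_univ_iff,
    forall_ne_univ_colorable_induce_iff, hχ4, hχ3]
  refine ⟨fun ⟨hG, hdel⟩ => ⟨⟨?_, hG⟩, hdel⟩, fun ⟨⟨_, hG⟩, hdel⟩ => ⟨hG, hdel⟩⟩
  obtain ⟨v⟩ : Nonempty V := not_isEmpty_iff.1 fun _ => hG (.of_isEmpty 3)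
  exact colorable_succ_of_colorable_induce_compl v (hdel v)

theorem stmt_19 [Fintype V] (G : SimpleGraph V) (htf : G.CliqueFree 3) :
    MNPD G ↔
      (G.chromaticNumber = 4 ∧
        ∀ v : V, (G.induce ({v}ᶜ : Set V)).chromaticNumber ≤ 3) :=
  stmt_19_general G htf
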